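/- Suppose L is a linear order with a least element that condenses to 1 under the countable condensation and has no countable cofinal subset (i.e. cf(L) = ω₁). Then there exist a linear order L', an order embedding of L into L', such that: L' condenses to 1 under ∼_ω, L' has a least element, L' has no countable cofinal subset, and there is a strictly increasing function y : ω₁ → L' such that every z : L' satisfies y α ≤ z < y (Order.succ α) for some α in ω₁; in particular L' is the disjoint union of the intervals [y α, y (Order.succ α)). -/

import Mathlib

/-! Because `L` has a least element and condenses to `1`, every initial segment `Iic z` of `L` is
countable. As no countable set is cofinal, a transfinite recursion yields a strictly increasing
`y : ω₁ → L`, which is cofinal because `ω₁` does not inject into a countable `Iic z`. Its lower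
adjoint `f l = min {α | l ≤ y α}` is monotone with countable preimages `{l | f l ≤ α} = Iic (y α)`.
Now cut `L` into the blocks `f ⁻¹' {α}` and put a new point in front of each block: inside
`ω₁ ×ₗ WithBot L` these are the points `(α, ⊥)` and `(f l, l)`. The new points form the required
sequence, and initial segments stay countable because `ω₁` has countable initial segments. -/

/-- The canonical linear order of order type `ω₁`. -/
noncomputable abbrev Omega1 : Type := (Cardinal.aleph 1).ord.ToType

noncomputable instance : SuccOrder Omega1 := SuccOrder.ofLinearWellFoundedLT Omega1

/-- An extension `L'` of a linear order `L` as in Proposition 3.10: `L'` condenses to `1`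
under the countable condensation, has a least element, has no countable cofinal subset,
and carries a strictly increasing cofinal sequence `y : ω₁ → L'` such that
`L' = ⋃ₐ [y α, y (succ α))`. -/
structure CondensationExtension (L : Type u) [LinearOrder L] : Type (u + 1) where
  /-- the underlying type of `L'` -/
  carrier : Type u
  /-- `L'` is a linear order -/
  [linearOrder : LinearOrder carrier]
  /-- `L` order-embeds into `L'` -/
  emb : L ↪o carrier
  /-- `L'` condenses to `1` under the countable condensation -/
  condensesToOne : ∀ x y : carrier, (Set.uIcc x y).Countable
  /-- `L'` has a least element -/
  exists_bot : ∃ b : carrier, ∀ z : carrier, b ≤ z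
  /-- `L'` has no countable cofinal subset -/
  no_countable_cofinal :
    ¬ ∃ S : Set carrier, S.Countable ∧ ∀ l : carrier, ∃ s ∈ S, l ≤ s
  /-- the sequence `y : ω₁ → L'` -/
  seq : Omega1 → carrier
  /-- `y` is strictly increasing -/
  seq_strictMono : StrictMono seq
  /-- every `z : L'` lies in `[y α, y (succ α))` for some `α < ω₁`, so `L'` is the
  disjoint union of these intervals -/
  seq_covers : ∀ z : carrier, ∃ α : Omega1, seq α ≤ z ∧ z < seq (Order.succ α)

open Set Cardinal

noncomputable instance : NoMaxOrder Omega1 :=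
  Cardinal.noMaxOrder (aleph0_le_aleph 1)

theorem mk_omega1 : #Omega1 = ℵ₁ := by
  rw [mk_toType, card_ord]

instance : Uncountable Omega1 :=
  aleph0_lt_mk_iff.1 (mk_omega1 ▸ aleph0_lt_aleph_one)

theorem Omega1.countable_Iio (i : Omega1) : (Iio i).Countable := by
  have := mk_Iio_lt i (by rw [mk_omega1]; exact (Ordinal.type_toType _).symm)
  rw [mk_omega1] at this
  exact le_aleph0_iff_set_countable.1 (lt_aleph_one_iff.1 this)

theorem Omega1.countable_Iic (i : Omega1) : (Iic i).Countable := by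
  rw [← Iio_insert]
  exact (Omega1.countable_Iio i).insert i

theorem Omega1.not_isCofinal_of_countable {S : Set Omega1} (hS : S.Countable) :
    ¬ IsCofinal S := fun hcof =>
  not_countable_univ <| (hS.biUnion fun i _ => Omega1.countable_Iic i).mono fun j _ =>
    let ⟨_, hi, hji⟩ := hcof j
    mem_biUnion hi hji

theorem exists_strictMono_of_countable_Iio {α β : Type*} [Preorder α] [WellFoundedLT α]
    [Preorder β] (hα : ∀ a : α, (Iio a).Countable)
    (hβ : ∀ S : Set β, S.Countable → ∃ b, ∀ s ∈ S, s < b) :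
    ∃ f : α → β, StrictMono f := by
  choose ub hub using hβ
  have hrange : ∀ (a : α) (g : Iio a → β), (range g).Countable := fun a g =>
    have := (hα a).to_subtype
    countable_range g
  obtain ⟨f, hf⟩ : ∃ f : α → β, ∀ a, f a = ub (range fun c : Iio a => f c) (hrange a _) :=
    ⟨_, wellFounded_lt.fix_eq fun a rec => ub (range fun c : Iio a => rec c c.2) (hrange a _)⟩
  refine ⟨f, fun b a hba => ?_⟩
  rw [hf a]
  exact hub _ _ _ ⟨⟨b, hba⟩, rfl⟩

theorem isCofinal_range_of_injective {α β : Type*} [Uncountable α] [LinearOrder β]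
    (hβ : ∀ b : β, (Iic b).Countable) {f : α → β} (hf : f.Injective) : IsCofinal (range f) := by
  intro b
  by_contra! h
  exact not_countable_univ <| ((hβ b).preimage hf).mono fun a _ => (h _ (mem_range_self a)).le

theorem exists_galoisConnection_of_isCofinal_range {ι L : Type*} [LinearOrder ι]
    [WellFoundedLT ι] [Preorder L] {y : ι → L} (hy : Monotone y) (hcof : IsCofinal (range y)) :
    ∃ f : L → ι, GaloisConnection f y := by
  have hne : ∀ l, {i | l ≤ y i}.Nonempty := fun l => by
    obtain ⟨_, ⟨i, rfl⟩, hl⟩ := hcof l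
    exact ⟨i, hl⟩
  refine ⟨fun l => wellFounded_lt.min _ (hne l), fun l i =>
    ⟨fun h => ?_, fun h => WellFounded.min_le (β := ι) _ h⟩⟩
  exact (wellFounded_lt.min_mem _ (hne l)).trans (hy h)

theorem exists_galoisConnection_omega1 {L : Type*} [LinearOrder L]
    (hIic : ∀ z : L, (Iic z).Countable) (hcof : ∀ S : Set L, S.Countable → ¬ IsCofinal S) :
    ∃ (f : L → Omega1) (y : Omega1 → L), GaloisConnection f y := by
  have hub : ∀ S : Set L, S.Countable → ∃ b, ∀ s ∈ S, s < b := fun S hS => by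
    simpa [IsCofinal] using hcof S hS
  obtain ⟨y, hy⟩ := exists_strictMono_of_countable_Iio Omega1.countable_Iio hub
  obtain ⟨f, gc⟩ := exists_galoisConnection_of_isCofinal_range hy.monotone
    (isCofinal_range_of_injective hIic hy.injective)
  exact ⟨f, y, gc⟩

def blockExtension {ι L : Type*} (f : L → ι) : Set (ι ×ₗ WithBot L) :=
  range (fun i => toLex (i, ⊥)) ∪ range (fun l => toLex (f l, (l : WithBot L)))

namespace blockExtension

variable {ι L : Type*} [LinearOrder ι] [LinearOrder L] (f : L → ι)

def start (i : ι) : blockExtension f := ⟨toLex (i, ⊥), .inl ⟨i, rfl⟩⟩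

def embed {f : L → ι} (hf : Monotone f) : L ↪o blockExtension f :=
  OrderEmbedding.ofStrictMono (fun l => ⟨toLex (f l, l), .inr ⟨l, rfl⟩⟩) fun _ _ h =>
    Prod.Lex.toLex_lt_toLex'.2 ⟨hf h.le, fun _ => WithBot.coe_lt_coe.2 h⟩

theorem start_strictMono : StrictMono (start f) := fun _ _ h =>
  Prod.Lex.toLex_lt_toLex.2 (.inl h)

theorem start_fst_le (z : blockExtension f) : start f (ofLex z.1).1 ≤ z :=
  Prod.Lex.le_iff'.2 ⟨le_rfl, fun _ => bot_le⟩

theorem lt_start_succ_fst [SuccOrder ι] [NoMaxOrder ι] (z : blockExtension f) :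
    z < start f (Order.succ (ofLex z.1).1) :=
  Prod.Lex.lt_iff.2 (.inl (Order.lt_succ _))

theorem exists_isBot [WellFoundedLT ι] [Nonempty ι] : ∃ z : blockExtension f, IsBot z := by
  obtain ⟨i, -, hi⟩ := wellFounded_lt.has_min (univ : Set ι) univ_nonempty
  exact ⟨start f i, fun z =>
    ((start_strictMono f).monotone (not_lt.1 (hi _ trivial))).trans (start_fst_le f z)⟩

theorem countable_Iic (hι : ∀ i : ι, (Iic i).Countable) (hf : ∀ i, {l | f l ≤ i}.Countable)
    (z : blockExtension f) : (Iic z).Countable := by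
  have hsub : Iic z ⊆ Subtype.val ⁻¹' ((fun i => toLex (i, ⊥)) '' Iic (ofLex z.1).1 ∪
      (fun l => toLex (f l, (l : WithBot L))) '' {l | f l ≤ (ofLex z.1).1}) := by
    rintro ⟨_, ⟨i, rfl⟩ | ⟨l, rfl⟩⟩ hw
    · exact .inl ⟨i, Prod.Lex.monotone_fst _ _ hw, rfl⟩
    · exact .inr ⟨l, Prod.Lex.monotone_fst _ _ hw, rfl⟩
  exact ((((hι _).image _).union ((hf _).image _)).preimage Subtype.val_injective).mono hsub

theorem not_isCofinal_of_countable (hι : ∀ S : Set ι, S.Countable → ¬ IsCofinal S)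
    {S : Set (blockExtension f)} (hS : S.Countable) : ¬ IsCofinal S := by
  intro hcof
  refine hι ((fun z => (ofLex z.1).1) '' S) (hS.image _) fun i => ?_
  obtain ⟨z, hz, hiz⟩ := hcof (start f i)
  exact ⟨_, mem_image_of_mem _ hz, Prod.Lex.monotone_fst _ _ hiz⟩

end blockExtension

/-- If `L` is a linear order with a least element that condenses to `1`
under the countable condensation and has no countable cofinal subset (`cf(L) = ω₁`), then
`L` embeds into a linear order `L'` that condenses to `1`, has a least element, has no
countable cofinal subset, and is partitioned by the intervals `[y α, y (succ α))` of a
strictly increasing sequence `y : ω₁ → L'`. -/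
theorem exists_condensationExtension
    {L : Type u} [LinearOrder L]
    (hbot : ∃ b : L, ∀ z : L, b ≤ z)
    (hcond : ∀ x y : L, (Set.uIcc x y).Countable)
    (hcof : ¬ ∃ S : Set L, S.Countable ∧ ∀ l : L, ∃ s ∈ S, l ≤ s) :
    Nonempty (CondensationExtension L) := by
  obtain ⟨b, hb⟩ := hbot
  have hIic : ∀ z : L, (Iic z).Countable := fun z =>
    (hcond b z).mono fun x hx => uIcc_of_le (hb z) ▸ ⟨hb x, hx⟩
  obtain ⟨f, y, gc⟩ := exists_galoisConnection_omega1 hIic fun S hS h => hcof ⟨S, hS, h⟩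
  have hf : ∀ i, {l | f l ≤ i}.Countable := fun i => (hIic (y i)).mono fun _ => (gc _ _).1
  exact ⟨{ carrier := blockExtension f
           emb := blockExtension.embed gc.monotone_l
           condensesToOne := fun _ _ =>
             (blockExtension.countable_Iic f Omega1.countable_Iic hf _).mono Icc_subset_Iic_self
           exists_bot := blockExtension.exists_isBot f
           no_countable_cofinal := fun ⟨_, hS, hS'⟩ =>
             blockExtension.not_isCofinal_of_countable f
               (fun _ => Omega1.not_isCofinal_of_countable) hS hS'
           seq := blockExtension.start f
           seq_strictMono := blockExtension.start_strictMono f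
           seq_covers := fun z =>
             ⟨_, blockExtension.start_fst_le f z, blockExtension.lt_start_succ_fst f z⟩ }⟩
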